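/- arXiv:1301.6058 — 7 statements merged into one kernel-verified Lean document; each statement's English description precedes it below -/
import Mathlib

section
/- Fix b > 0 and positive weights a_1,…,a_T > 0. For every t with 1 ≤ t ≤ T, the identity a_t² · x_tᵀ A_t^{−1} x_t + 1 − a_t = (1 + a_t x_tᵀ A_{t−1}^{−1} x_t − a_t) / (1 + a_t x_tᵀ A_{t−1}^{−1} x_t) holds (the denominator is strictly positive since A_{t−1} is positive definite and a_t > 0). -/
open Matrix Finset

/-!
Since `A_t = A_{t-1} + a_t x_t x_tᵀ`, the matrix `A_t` maps `A_{t-1}⁻¹ x_t` to `(1 + a_t q) x_t`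
with `q = x_tᵀ A_{t-1}⁻¹ x_t` (Sherman–Morrison), so `q = (1 + a_t q) · x_tᵀ A_t⁻¹ x_t`.
Substituting this, the identity becomes a polynomial one after clearing the denominator
`1 + a_t q`, which is positive because `A_{t-1}⁻¹` is positive definite.
-/

namespace Matrix

variable {n : Type*} [Fintype n] [DecidableEq n]

theorem inv_mulVec_eq_smul_inv_add_vecMulVec_mulVec {R : Type*} [CommRing R]
    {M : Matrix n n R} (u w : n → R) (hM : IsUnit M) (hN : IsUnit (M + vecMulVec u w)) :
    M⁻¹ *ᵥ u = (1 + w ⬝ᵥ (M⁻¹ *ᵥ u)) • ((M + vecMulVec u w)⁻¹ *ᵥ u) := by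
  have hNu : (M + vecMulVec u w) *ᵥ (M⁻¹ *ᵥ u) = (1 + w ⬝ᵥ (M⁻¹ *ᵥ u)) • u := by
    rw [add_mulVec, mulVec_mulVec, mul_nonsing_inv M ((isUnit_iff_isUnit_det M).mp hM),
      one_mulVec, vecMulVec_mulVec, op_smul_eq_smul, add_smul, one_smul]
  rw [← mulVec_smul, ← hNu, mulVec_mulVec,
    nonsing_inv_mul _ ((isUnit_iff_isUnit_det _).mp hN), one_mulVec]

theorem posDef_smul_one_add_sum_smul_vecMulVec_self {ι : Type*} {b : ℝ} (hb : 0 < b)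
    (F : Finset ι) {c : ι → ℝ} (hc : ∀ s ∈ F, 0 ≤ c s) (v : ι → n → ℝ) :
    (b • (1 : Matrix n n ℝ) + ∑ s ∈ F, c s • vecMulVec (v s) (v s)).PosDef := by
  refine (PosDef.one.smul hb).add_posSemidef (posSemidef_sum F fun s hs => ?_)
  simpa using (posSemidef_vecMulVec_self_star (v s)).smul (hc s hs)

end Matrix

/-- `a_t²·x_tᵀA_t⁻¹x_t + 1 − a_t
  = (1 + a_t x_tᵀA_{t−1}⁻¹x_t − a_t)/(1 + a_t x_tᵀA_{t−1}⁻¹x_t)`. -/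
theorem stmt_1 {d T : ℕ} (b : ℝ) (hb : 0 < b)
    (a : ℕ → ℝ) (ha : ∀ s ∈ Icc 1 T, 0 < a s)
    (x : ℕ → (Fin d → ℝ))
    (A : ℕ → Matrix (Fin d) (Fin d) ℝ)
    (hA : ∀ t, A t = b • (1 : Matrix (Fin d) (Fin d) ℝ)
        + ∑ s ∈ Icc 1 t, a s • vecMulVec (x s) (x s))
    (t : ℕ) (ht : t ∈ Icc 1 T) :
    (a t) ^ 2 * (x t ⬝ᵥ ((A t)⁻¹ *ᵥ x t)) + 1 - a t
      = (1 + a t * (x t ⬝ᵥ ((A (t - 1))⁻¹ *ᵥ x t)) - a t)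
        / (1 + a t * (x t ⬝ᵥ ((A (t - 1))⁻¹ *ᵥ x t))) := by
  obtain ⟨k, rfl⟩ : ∃ k, t = k + 1 := ⟨t - 1, by grind⟩
  have hkT : k + 1 ≤ T := (mem_Icc.mp ht).2
  have hposDef : ∀ u ≤ T, (A u).PosDef := fun u hu => by
    rw [hA]
    exact posDef_smul_one_add_sum_smul_vecMulVec_self hb _
      (fun s hs => (ha s (Icc_subset_Icc_right hu hs)).le) x
  have hstep : A (k + 1) = A k + vecMulVec (x (k + 1)) (a (k + 1) • x (k + 1)) := by
    rw [hA, hA, sum_Icc_succ_top (by omega), vecMulVec_smul, add_assoc]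
  set q := x (k + 1) ⬝ᵥ ((A k)⁻¹ *ᵥ x (k + 1))
  have hq : 0 ≤ q := by
    simpa using (hposDef k (by omega)).inv.posSemidef.dotProduct_mulVec_nonneg (x (k + 1))
  have hrec : q = (1 + a (k + 1) * q) * (x (k + 1) ⬝ᵥ ((A (k + 1))⁻¹ *ᵥ x (k + 1))) := by
    have := inv_mulVec_eq_smul_inv_add_vecMulVec_mulVec (x (k + 1)) (a (k + 1) • x (k + 1))
      (hposDef k (by omega)).isUnit (hstep ▸ (hposDef (k + 1) hkT).isUnit)
    rw [← hstep, smul_dotProduct, smul_eq_mul] at this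
    change x (k + 1) ⬝ᵥ ((A k)⁻¹ *ᵥ x (k + 1)) = _
    conv_lhs => rw [this, dotProduct_smul, smul_eq_mul]
  have hden : 0 < 1 + a (k + 1) * q := by
    have := ha (k + 1) ht
    positivity
  rw [Nat.add_sub_cancel, eq_div_iff hden.ne']
  linear_combination (a (k + 1)) ^ 2 * hrec.symm
end

section
/- Fix b > 0, positive weights a_1,…,a_T > 0, inputs x_1,…,x_T ∈ ℝ^d and labels y_1,…,y_{T−1} ∈ ℝ, and assume 1 + a_T x_Tᵀ A_{T−1}^{−1} x_T − a_T ≤ 0. Define the last-step min-max objective G(y, ŷ) = ((1 + a_T x_Tᵀ A_{T−1}^{−1} x_T − a_T)/(1 + a_T x_Tᵀ A_{T−1}^{−1} x_T))·y² + 2y·(a_T b_{T−1}ᵀ A_T^{−1} x_T − ŷ) + ŷ². Then ŷ* = b_{T−1}ᵀ A_{T−1}^{−1} x_T is an optimal prediction: for every ŷ ∈ ℝ, sup_{y ∈ ℝ} G(y, ŷ*) ≤ sup_{y ∈ ℝ} G(y, ŷ) (where the suprema are taken in the extended reals ℝ ∪ {+∞}). -/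
open Matrix Finset

/-!
Write `q = x_Tᵀ A_{T-1}⁻¹ x_T`, `s = b_{T-1}ᵀ A_{T-1}⁻¹ x_T` and `r` for the coefficient
of `y²`.
By Sherman–Morrison, `A_T⁻¹ x_T = A_{T-1}⁻¹ x_T / (1 + a_T q)`, so the linear coefficient is
`a_T b_{T-1}ᵀ A_T⁻¹ x_T = (1 - r) s` and
`G(y, ŷ) = (1 - r) s² + r (y - s)² - 2 (y - s)(ŷ - s) + (ŷ - s)²`.
Since `r ≤ 0`, the point `(s, s)` is a saddle point of `G`:
`G(y, s) ≤ G(s, s) ≤ G(s, ŷ)` for all `y` and `ŷ`.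
-/

namespace Matrix

variable {n K : Type*} [Fintype n] [DecidableEq n]

lemma add_smul_vecMulVec_mulVec_inv_mulVec [CommRing K] {M : Matrix n n K} (hM : IsUnit M.det)
    (a : K) (x v : n → K) :
    (M + a • vecMulVec x v) *ᵥ (M⁻¹ *ᵥ x) = (1 + a * (v ⬝ᵥ M⁻¹ *ᵥ x)) • x := by
  rw [add_mulVec, mulVec_mulVec, mul_nonsing_inv _ hM, one_mulVec, smul_mulVec,
    vecMulVec_mulVec, op_smul_eq_smul, smul_smul, add_smul, one_smul]

/-- The Sherman–Morrison formula, evaluated at `x`. -/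
lemma inv_add_smul_vecMulVec_mulVec [Field K] {M : Matrix n n K} (hM : IsUnit M.det)
    {a : K} {x v : n → K} (hMax : IsUnit (M + a • vecMulVec x v).det)
    (hc : 1 + a * (v ⬝ᵥ M⁻¹ *ᵥ x) ≠ 0) :
    (M + a • vecMulVec x v)⁻¹ *ᵥ x = (1 + a * (v ⬝ᵥ M⁻¹ *ᵥ x))⁻¹ • (M⁻¹ *ᵥ x) := by
  have hsolve :
      (M + a • vecMulVec x v) *ᵥ ((1 + a * (v ⬝ᵥ M⁻¹ *ᵥ x))⁻¹ • (M⁻¹ *ᵥ x)) = x := by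
    rw [mulVec_smul, add_smul_vecMulVec_mulVec_inv_mulVec hM, smul_smul, inv_mul_cancel₀ hc,
      one_smul]
  let := invertibleOfIsUnitDet _ hMax
  exact inv_mulVec_eq_vec hsolve.symm

lemma posDef_smul_one_add_sum_smul_vecMulVec {ι : Type*} {b : ℝ} (hb : 0 < b) {S : Finset ι}
    {a : ι → ℝ} (ha : ∀ s ∈ S, 0 ≤ a s) (x : ι → n → ℝ) :
    (b • (1 : Matrix n n ℝ) + ∑ s ∈ S, a s • vecMulVec (x s) (x s)).PosDef :=
  (PosDef.one.smul hb).add_posSemidef <| posSemidef_sum S fun s hs =>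
    (posSemidef_vecMulVec_self_star (x s)).smul (ha s hs)

end Matrix

lemma quadratic_saddle {r : ℝ} (hr : r ≤ 0) (s y yhat : ℝ) :
    r * y ^ 2 + 2 * y * ((1 - r) * s - s) + s ^ 2
      ≤ r * s ^ 2 + 2 * s * ((1 - r) * s - yhat) + yhat ^ 2 := by
  nlinarith [mul_nonneg (neg_nonneg.2 hr) (sq_nonneg (y - s)), sq_nonneg (yhat - s)]

theorem stmt_4_general {d T : ℕ} (hT : 1 ≤ T) (b : ℝ) (hb : 0 < b)
    (a : ℕ → ℝ) (ha : ∀ s ∈ Icc 1 T, 0 < a s)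
    (x : ℕ → (Fin d → ℝ))
    (A : ℕ → Matrix (Fin d) (Fin d) ℝ)
    (hA : ∀ t, A t = b • (1 : Matrix (Fin d) (Fin d) ℝ)
        + ∑ s ∈ Icc 1 t, a s • vecMulVec (x s) (x s))
    (Bv : ℕ → (Fin d → ℝ))
    (hcond : 1 + a T * (x T ⬝ᵥ ((A (T - 1))⁻¹ *ᵥ x T)) - a T ≤ 0)
    (G : ℝ → ℝ → ℝ)
    (hG : ∀ yT yhat : ℝ, G yT yhat
        = ((1 + a T * (x T ⬝ᵥ ((A (T - 1))⁻¹ *ᵥ x T)) - a T)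
            / (1 + a T * (x T ⬝ᵥ ((A (T - 1))⁻¹ *ᵥ x T)))) * yT ^ 2
          + 2 * yT * (a T * (Bv (T - 1) ⬝ᵥ ((A T)⁻¹ *ᵥ x T)) - yhat) + yhat ^ 2) :
    ∀ yhat : ℝ,
      (⨆ yT : ℝ, ((G yT (Bv (T - 1) ⬝ᵥ ((A (T - 1))⁻¹ *ᵥ x T)) : ℝ) : EReal))
        ≤ ⨆ yT : ℝ, ((G yT yhat : ℝ) : EReal) := by
  have hApos : ∀ t ≤ T, (A t).PosDef := fun t ht => hA t ▸
    posDef_smul_one_add_sum_smul_vecMulVec hb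
      (fun s hs => (ha s (Icc_subset_Icc_right ht hs)).le) x
  have hprev := hApos (T - 1) (Nat.sub_le T 1)
  have hsplit : A T = A (T - 1) + a T • vecMulVec (x T) (x T) := by
    obtain ⟨t, rfl⟩ := Nat.exists_eq_add_of_le' hT
    rw [hA, hA, Nat.add_sub_cancel, sum_Icc_succ_top (by omega), add_assoc]
  set q := x T ⬝ᵥ (A (T - 1))⁻¹ *ᵥ x T
  set s := Bv (T - 1) ⬝ᵥ (A (T - 1))⁻¹ *ᵥ x T
  have hq : 0 ≤ q := by simpa using hprev.inv.posSemidef.dotProduct_mulVec_nonneg (x T)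
  have hc : 0 < 1 + a T * q := by
    have := (ha T (by simp [hT])).le
    positivity
  have hmid : a T * (Bv (T - 1) ⬝ᵥ (A T)⁻¹ *ᵥ x T)
      = (1 - (1 + a T * q - a T) / (1 + a T * q)) * s := by
    have hdet := (hApos T le_rfl).det_pos.ne'.isUnit
    rw [hsplit] at hdet ⊢
    rw [inv_add_smul_vecMulVec_mulVec hprev.det_pos.ne'.isUnit hdet hc.ne', dotProduct_smul,
      smul_eq_mul]
    change a T * ((1 + a T * q)⁻¹ * s) = _
    field_simp
    ring
  intro yhat
  refine iSup_le fun yT => le_iSup_of_le s ?_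
  rw [EReal.coe_le_coe_iff, hG, hG, hmid]
  exact quadratic_saddle (div_nonpos_of_nonpos_of_nonneg hcond hc.le) s yT yhat

/-- under `1 + a_T x_TᵀA_{T−1}⁻¹x_T − a_T ≤ 0`, the prediction
`ŷ* = b_{T−1}ᵀ A_{T−1}⁻¹ x_T` is optimal for the last-step min-max objective `G`:
for every `ŷ`, `sup_y G(y, ŷ*) ≤ sup_y G(y, ŷ)` (suprema in the extended reals). -/
theorem stmt_4 {d T : ℕ} (hT : 1 ≤ T) (b : ℝ) (hb : 0 < b)
    (a : ℕ → ℝ) (ha : ∀ s ∈ Icc 1 T, 0 < a s)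
    (x : ℕ → (Fin d → ℝ)) (y : ℕ → ℝ)
    (A : ℕ → Matrix (Fin d) (Fin d) ℝ)
    (hA : ∀ t, A t = b • (1 : Matrix (Fin d) (Fin d) ℝ)
        + ∑ s ∈ Icc 1 t, a s • vecMulVec (x s) (x s))
    (Bv : ℕ → (Fin d → ℝ))
    (hBv : ∀ t, Bv t = ∑ s ∈ Icc 1 t, (a s * y s) • x s)
    (hcond : 1 + a T * (x T ⬝ᵥ ((A (T - 1))⁻¹ *ᵥ x T)) - a T ≤ 0)
    (G : ℝ → ℝ → ℝ)
    (hG : ∀ yT yhat : ℝ, G yT yhat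
        = ((1 + a T * (x T ⬝ᵥ ((A (T - 1))⁻¹ *ᵥ x T)) - a T)
            / (1 + a T * (x T ⬝ᵥ ((A (T - 1))⁻¹ *ᵥ x T)))) * yT ^ 2
          + 2 * yT * (a T * (Bv (T - 1) ⬝ᵥ ((A T)⁻¹ *ᵥ x T)) - yhat) + yhat ^ 2) :
    ∀ yhat : ℝ,
      (⨆ yT : ℝ, ((G yT (Bv (T - 1) ⬝ᵥ ((A (T - 1))⁻¹ *ᵥ x T)) : ℝ) : EReal))
        ≤ ⨆ yT : ℝ, ((G yT yhat : ℝ) : EReal) :=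
  stmt_4_general hT b hb a ha x A hA Bv hcond G hG
end

section
/- Fix b > 0 and positive weights a_1,…,a_T > 0, and assume 1 + a_t x_tᵀ A_{t−1}^{−1} x_t − a_t ≤ 0 for all t = 1,…,T. Then the cumulative loss of WEMM satisfies Σ_{t=1}^T (y_t − ŷ_t)² ≤ inf_{u ∈ ℝ^d} ( b‖u‖² + Σ_{t=1}^T a_t (y_t − uᵀx_t)² ). Moreover, if 1 + a_t x_tᵀ A_{t−1}^{−1} x_t − a_t = 0 for all t, then this inequality holds with equality. -/
/-!
Write `Φ_t = Σ_{s ≤ t} a_s y_s² - b_tᵀ A_t⁻¹ b_t`. Completing the square gives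
`b‖u‖² + L_t^a(u) = Φ_t + (u - A_t⁻¹ b_t)ᵀ A_t (u - A_t⁻¹ b_t)`, so `Φ_T` is the infimum on the
right-hand side. The Sherman–Morrison formula for `A_t = A_{t-1} + a_t x_t x_tᵀ` gives
`Φ_t - Φ_{t-1} = a_t / (1 + a_t x_tᵀ A_{t-1}⁻¹ x_t) · (y_t - ŷ_t)²`, so `Φ_T` telescopes into a
weighted sum of the losses of WEMM, with weights `≥ 1` under the hypothesis and `= 1` under the
equality condition.
-/

open Matrix Finset

namespace Matrix

variable {K n : Type*} [Field K] [Fintype n]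

theorem IsSymm.dotProduct_mulVec_comm {M : Matrix n n K} (hM : M.IsSymm) (u v : n → K) :
    u ⬝ᵥ (M *ᵥ v) = v ⬝ᵥ (M *ᵥ u) := by
  rw [dotProduct_mulVec, ← mulVec_transpose, hM.eq, dotProduct_comm]

variable [DecidableEq n]

theorem inv_add_vecMulVec {P : Matrix n n K} (hP : IsUnit P) (u v : n → K)
    (h : 1 + v ⬝ᵥ (P⁻¹ *ᵥ u) ≠ 0) :
    (P + vecMulVec u v)⁻¹
      = P⁻¹ - (1 + v ⬝ᵥ (P⁻¹ *ᵥ u))⁻¹ • vecMulVec (P⁻¹ *ᵥ u) (v ᵥ* P⁻¹) := by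
  have hPP : P * P⁻¹ = 1 := mul_nonsing_inv P ((isUnit_iff_isUnit_det P).mp hP)
  apply inv_eq_right_inv
  rw [add_mul, mul_sub, mul_sub, hPP, Matrix.mul_smul, Matrix.mul_smul, mul_vecMulVec,
    mulVec_mulVec, hPP, one_mulVec, vecMulVec_mul_vecMulVec, vecMulVec_smul, vecMulVec_mul,
    smul_smul]
  match_scalars
  · rfl
  · linear_combination -inv_mul_cancel₀ h

theorem dotProduct_inv_add_smul_vecMulVec_self_mulVec {P : Matrix n n K} (hP : IsUnit P)
    (hPs : P.IsSymm) (c y : K) (x B : n → K) (h : 1 + c * (x ⬝ᵥ (P⁻¹ *ᵥ x)) ≠ 0) :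
    (B + (c * y) • x) ⬝ᵥ ((P + c • vecMulVec x x)⁻¹ *ᵥ (B + (c * y) • x))
      = B ⬝ᵥ (P⁻¹ *ᵥ B) + c * y ^ 2
        - c / (1 + c * (x ⬝ᵥ (P⁻¹ *ᵥ x))) * (y - B ⬝ᵥ (P⁻¹ *ᵥ x)) ^ 2 := by
  have hsymm := hPs.inv
  have hxP : x ᵥ* P⁻¹ = P⁻¹ *ᵥ x := by rw [← mulVec_transpose, hsymm.eq]
  rw [← smul_vecMulVec, inv_add_vecMulVec hP _ _ (by rwa [mulVec_smul, dotProduct_smul]), hxP]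
  simp only [sub_mulVec, mulVec_add, mulVec_smul, smul_mulVec, vecMulVec_mulVec, op_smul_eq_smul,
    add_dotProduct, dotProduct_add, dotProduct_sub, smul_dotProduct, dotProduct_smul, smul_eq_mul]
  simp only [hsymm.dotProduct_mulVec_comm x B, dotProduct_comm (P⁻¹ *ᵥ x)]
  field_simp
  ring

theorem dotProduct_mulVec_sub_two_mul_dotProduct {M : Matrix n n K} (hM : IsUnit M)
    (hMs : M.IsSymm) (u B : n → K) :
    u ⬝ᵥ (M *ᵥ u) - 2 * (u ⬝ᵥ B)
      = (u - M⁻¹ *ᵥ B) ⬝ᵥ (M *ᵥ (u - M⁻¹ *ᵥ B)) - B ⬝ᵥ (M⁻¹ *ᵥ B) := by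
  have hMB : M *ᵥ (M⁻¹ *ᵥ B) = B := by
    rw [mulVec_mulVec, mul_nonsing_inv M ((isUnit_iff_isUnit_det M).mp hM), one_mulVec]
  rw [mulVec_sub, hMB, sub_dotProduct, dotProduct_sub, dotProduct_sub,
    hMs.dotProduct_mulVec_comm (M⁻¹ *ᵥ B) u, hMB, dotProduct_comm (M⁻¹ *ᵥ B) B]
  ring

theorem iInf_dotProduct_mulVec_sub_two_mul_dotProduct {M : Matrix n n ℝ} (hM : M.PosDef)
    (B : n → ℝ) (c : ℝ) :
    ⨅ u, (u ⬝ᵥ (M *ᵥ u) - 2 * (u ⬝ᵥ B) + c) = c - B ⬝ᵥ (M⁻¹ *ᵥ B) := by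
  have hsq := dotProduct_mulVec_sub_two_mul_dotProduct hM.isUnit hM.isHermitian (B := B)
  apply IsGLB.ciInf_eq
  apply IsLeast.isGLB
  refine ⟨⟨M⁻¹ *ᵥ B, ?_⟩, ?_⟩
  · dsimp only
    rw [hsq, sub_self, zero_dotProduct]
    ring
  · rintro _ ⟨u, rfl⟩
    have := hM.posSemidef.dotProduct_mulVec_nonneg (u - M⁻¹ *ᵥ B)
    simp only [star_trivial] at this
    linarith [hsq u]

theorem PosDef.one_add_mul_dotProduct_inv_mulVec_pos {P : Matrix n n ℝ} (hP : P.PosDef) {c : ℝ}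
    (hc : 0 ≤ c) (v : n → ℝ) :
    0 < 1 + c * (v ⬝ᵥ (P⁻¹ *ᵥ v)) := by
  have := hP.inv.posSemidef.dotProduct_mulVec_nonneg v
  simp only [star_trivial] at this
  positivity

end Matrix

theorem Finset.sum_Icc_one_sub {M : Type*} [AddCommGroup M] (f : ℕ → M) (T : ℕ) :
    ∑ t ∈ Icc 1 T, (f t - f (t - 1)) = f T - f 0 := by
  rw [← Ico_add_one_right_eq_Icc, sum_Ico_eq_sum_range, add_tsub_cancel_right, ← sum_range_sub]
  simp [add_comm]

section

variable {n : Type*} (b : ℝ) (a : ℕ → ℝ) (x : ℕ → n → ℝ) (y : ℕ → ℝ)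

def weightedMoment (t : ℕ) : n → ℝ := ∑ s ∈ Icc 1 t, (a s * y s) • x s

theorem weightedMoment_zero : weightedMoment a x y 0 = 0 := by simp [weightedMoment]

theorem weightedMoment_add_one (t : ℕ) :
    weightedMoment a x y (t + 1) = weightedMoment a x y t + (a (t + 1) * y (t + 1)) • x (t + 1) :=
  sum_Icc_succ_top (by omega) _

variable [DecidableEq n]

def regGram (t : ℕ) : Matrix n n ℝ := b • 1 + ∑ s ∈ Icc 1 t, a s • vecMulVec (x s) (x s)

theorem regGram_add_one (t : ℕ) :
    regGram b a x (t + 1) = regGram b a x t + a (t + 1) • vecMulVec (x (t + 1)) (x (t + 1)) := by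
  rw [regGram, regGram, sum_Icc_succ_top (by omega), add_assoc]

variable [Fintype n]

theorem posDef_regGram (hb : 0 < b) {t : ℕ} (ha : ∀ s ∈ Icc 1 t, 0 ≤ a s) :
    (regGram b a x t).PosDef :=
  (PosDef.one.smul hb).add_posSemidef <| posSemidef_sum _ fun s hs =>
    (posSemidef_vecMulVec_self_star (x s)).smul (ha s hs)

theorem regLoss_eq (t : ℕ) (u : n → ℝ) :
    b * (u ⬝ᵥ u) + ∑ s ∈ Icc 1 t, a s * (y s - u ⬝ᵥ x s) ^ 2
      = u ⬝ᵥ (regGram b a x t *ᵥ u) - 2 * (u ⬝ᵥ weightedMoment a x y t)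
        + ∑ s ∈ Icc 1 t, a s * y s ^ 2 := by
  have hsq (s : ℕ) : a s * (y s - u ⬝ᵥ x s) ^ 2
      = a s * (u ⬝ᵥ x s * u ⬝ᵥ x s) - 2 * (a s * y s * (u ⬝ᵥ x s)) + a s * y s ^ 2 := by ring
  simp only [regGram, weightedMoment, add_mulVec, smul_mulVec, one_mulVec, sum_mulVec,
    vecMulVec_mulVec, op_smul_eq_smul, dotProduct_add, dotProduct_smul, dotProduct_sum,
    smul_eq_mul, hsq, sum_add_distrib, sum_sub_distrib, mul_sum]
  simp only [dotProduct_comm (x _) u]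
  ring

noncomputable def optimalRegLoss (t : ℕ) : ℝ :=
  ∑ s ∈ Icc 1 t, a s * y s ^ 2
    - weightedMoment a x y t ⬝ᵥ ((regGram b a x t)⁻¹ *ᵥ weightedMoment a x y t)

theorem optimalRegLoss_zero : optimalRegLoss b a x y 0 = 0 := by
  simp [optimalRegLoss, weightedMoment_zero]

theorem iInf_regLoss_eq_optimalRegLoss (hb : 0 < b) {t : ℕ} (ha : ∀ s ∈ Icc 1 t, 0 ≤ a s) :
    ⨅ u : n → ℝ, (b * (u ⬝ᵥ u) + ∑ s ∈ Icc 1 t, a s * (y s - u ⬝ᵥ x s) ^ 2)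
      = optimalRegLoss b a x y t := by
  simp only [regLoss_eq]
  exact iInf_dotProduct_mulVec_sub_two_mul_dotProduct (posDef_regGram b a x hb ha) _ _

theorem optimalRegLoss_add_one {t : ℕ} (hP : (regGram b a x t).PosDef) (ha : 0 ≤ a (t + 1)) :
    optimalRegLoss b a x y (t + 1) = optimalRegLoss b a x y t
      + a (t + 1) / (1 + a (t + 1) * (x (t + 1) ⬝ᵥ ((regGram b a x t)⁻¹ *ᵥ x (t + 1))))
        * (y (t + 1) - weightedMoment a x y t ⬝ᵥ ((regGram b a x t)⁻¹ *ᵥ x (t + 1))) ^ 2 := by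
  rw [optimalRegLoss, optimalRegLoss, regGram_add_one, weightedMoment_add_one,
    dotProduct_inv_add_smul_vecMulVec_self_mulVec hP.isUnit hP.isHermitian _ _ _ _
      (hP.one_add_mul_dotProduct_inv_mulVec_pos ha _).ne',
    sum_Icc_succ_top (by omega)]
  ring

theorem sum_div_mul_sq_error_eq_optimalRegLoss (hb : 0 < b) {T : ℕ}
    (ha : ∀ s ∈ Icc 1 T, 0 ≤ a s) :
    ∑ t ∈ Icc 1 T, a t / (1 + a t * (x t ⬝ᵥ ((regGram b a x (t - 1))⁻¹ *ᵥ x t)))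
        * (y t - weightedMoment a x y (t - 1) ⬝ᵥ ((regGram b a x (t - 1))⁻¹ *ᵥ x t)) ^ 2
      = optimalRegLoss b a x y T := by
  rw [← sub_zero (optimalRegLoss b a x y T), ← optimalRegLoss_zero b a x y,
    ← sum_Icc_one_sub]
  refine sum_congr rfl fun t ht => ?_
  obtain ⟨s, rfl⟩ : ∃ s, t = s + 1 := ⟨t - 1, by grind⟩
  have hP : (regGram b a x s).PosDef :=
    posDef_regGram b a x hb fun r hr => ha r (Icc_subset_Icc_right (by grind) hr)
  rw [add_tsub_cancel_right, optimalRegLoss_add_one b a x y hP (ha _ ht), add_sub_cancel_left]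

end

/-- if `1 + a_t x_tᵀA_{t−1}⁻¹x_t − a_t ≤ 0` for all `t`, then the
cumulative loss of WEMM is at most `inf_u (b‖u‖² + L_T^a(u))`; with equality if
the condition holds with equality for all `t`. -/
theorem stmt_6 {d T : ℕ} (b : ℝ) (hb : 0 < b)
    (a : ℕ → ℝ) (ha : ∀ s ∈ Icc 1 T, 0 < a s)
    (x : ℕ → (Fin d → ℝ)) (y : ℕ → ℝ)
    (A : ℕ → Matrix (Fin d) (Fin d) ℝ)
    (hA : ∀ t, A t = b • (1 : Matrix (Fin d) (Fin d) ℝ)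
        + ∑ s ∈ Icc 1 t, a s • vecMulVec (x s) (x s))
    (Bv : ℕ → (Fin d → ℝ))
    (hBv : ∀ t, Bv t = ∑ s ∈ Icc 1 t, (a s * y s) • x s)
    (hcond : ∀ t ∈ Icc 1 T, 1 + a t * (x t ⬝ᵥ ((A (t - 1))⁻¹ *ᵥ x t)) - a t ≤ 0) :
    (∑ t ∈ Icc 1 T, (y t - Bv (t - 1) ⬝ᵥ ((A (t - 1))⁻¹ *ᵥ x t)) ^ 2
      ≤ ⨅ u : Fin d → ℝ,
          (b * (u ⬝ᵥ u) + ∑ t ∈ Icc 1 T, a t * (y t - u ⬝ᵥ x t) ^ 2)) ∧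
    ((∀ t ∈ Icc 1 T, 1 + a t * (x t ⬝ᵥ ((A (t - 1))⁻¹ *ᵥ x t)) - a t = 0) →
      ∑ t ∈ Icc 1 T, (y t - Bv (t - 1) ⬝ᵥ ((A (t - 1))⁻¹ *ᵥ x t)) ^ 2
        = ⨅ u : Fin d → ℝ,
            (b * (u ⬝ᵥ u) + ∑ t ∈ Icc 1 T, a t * (y t - u ⬝ᵥ x t) ^ 2)) := by
  obtain rfl : A = regGram b a x := funext hA
  obtain rfl : Bv = weightedMoment a x y := funext hBv
  have ha' : ∀ s ∈ Icc 1 T, 0 ≤ a s := fun s hs => (ha s hs).le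
  have hden : ∀ t ∈ Icc 1 T, 0 < 1 + a t * (x t ⬝ᵥ ((regGram b a x (t - 1))⁻¹ *ᵥ x t)) :=
    fun t ht => (posDef_regGram b a x hb fun s hs =>
      ha' s (Icc_subset_Icc_right (by grind) hs)).one_add_mul_dotProduct_inv_mulVec_pos (ha' t ht) _
  rw [iInf_regLoss_eq_optimalRegLoss b a x y hb ha',
    ← sum_div_mul_sq_error_eq_optimalRegLoss b a x y hb ha']
  refine ⟨sum_le_sum fun t ht => ?_, fun hcond_eq => sum_congr rfl fun t ht => ?_⟩
  · exact le_mul_of_one_le_left (sq_nonneg _)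
      ((one_le_div (hden t ht)).2 (by linarith [hcond t ht]))
  · rw [(div_eq_one_iff_eq (hden t ht).ne').2 (by linarith [hcond_eq t ht]), one_mul]
end

section
/- Assume ‖x_t‖ ≤ 1 for all t = 1,…,T and b > 1, and let the weights be defined self-consistently by a_t = 1/(1 − x_tᵀ A_{t−1}^{−1} x_t) for t = 1,…,T. Then this recursion is well-defined (1 − x_tᵀ A_{t−1}^{−1} x_t ≥ 1 − 1/b > 0 for all t) and 1 ≤ a_t ≤ b/(b−1) for all t = 1,…,T. -/
/-!
Each update adds the positive semidefinite matrix `a_t x_t x_tᵀ`, so as long as the weights are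
nonnegative the invariant `A_t ≥ b • 1` (Loewner order) is kept. It forces
`0 ≤ x_tᵀ A_{t-1}⁻¹ x_t ≤ ‖x_t‖² / b ≤ 1 / b`, and hence `a_t = 1 / (1 - x_tᵀ A_{t-1}⁻¹ x_t)` lies in
`[1, b / (b - 1)]`; in particular `a_t ≥ 0`, which propagates the invariant to the next step.
-/

open Matrix Finset

lemma one_div_one_sub_mem_Icc {b q : ℝ} (hb : 1 < b) (hq : q ∈ Set.Icc 0 (1 / b)) :
    1 / (1 - q) ∈ Set.Icc 1 (b / (b - 1)) := by
  obtain ⟨hq0, hq1⟩ := hq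
  have hqb : q * b ≤ 1 := (le_div_iff₀ (by linarith)).1 hq1
  have hq : 0 < 1 - q := by nlinarith
  constructor
  · rw [le_div_iff₀ hq]; linarith
  · rw [div_le_div_iff₀ hq (by linarith)]; nlinarith

section LoewnerLowerBound

variable {n : Type*}

lemma posSemidef_smul_vecMulVec_self [Fintype n] {c : ℝ} (hc : 0 ≤ c) (x : n → ℝ) :
    (c • vecMulVec x x).PosSemidef := by
  simpa using (posSemidef_vecMulVec_self_star x).smul hc

lemma posSemidef_of_posSemidef_sub_smul_one [DecidableEq n] {M : Matrix n n ℝ} {b : ℝ}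
    (hb : 0 ≤ b) (hMb : (M - b • 1).PosSemidef) : M.PosSemidef := by
  simpa using hMb.add (PosSemidef.one.smul hb)

lemma dotProduct_inv_mulVec_nonneg [Fintype n] [DecidableEq n] {M : Matrix n n ℝ}
    (hM : M.PosSemidef) (x : n → ℝ) : 0 ≤ x ⬝ᵥ (M⁻¹ *ᵥ x) := by
  simpa using hM.inv.dotProduct_mulVec_nonneg x

lemma dotProduct_inv_mulVec_le_div [Fintype n] [DecidableEq n] {M : Matrix n n ℝ} {b : ℝ}
    (hb : 0 < b) (hMb : (M - b • 1).PosSemidef) (x : n → ℝ) :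
    x ⬝ᵥ (M⁻¹ *ᵥ x) ≤ (x ⬝ᵥ x) / b := by
  have hM : M.PosDef := by simpa using PosDef.posSemidef_add hMb (PosDef.one.smul hb)
  set z := M⁻¹ *ᵥ x
  have hMz : M *ᵥ z = x := by
    rw [mulVec_mulVec, mul_nonsing_inv _ hM.det_pos.ne'.isUnit, one_mulVec]
  have hzx : z ⬝ᵥ x = x ⬝ᵥ z := dotProduct_comm _ _
  -- `zᵀ (M - b • 1) z ≥ 0` and `‖x - b z‖² ≥ 0` combine to `b xᵀz ≤ ‖x‖²`.
  have hMb_z : b * (z ⬝ᵥ z) ≤ x ⬝ᵥ z := by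
    have := hMb.dotProduct_mulVec_nonneg z
    simp only [star_trivial, sub_mulVec, dotProduct_sub, smul_mulVec, one_mulVec,
      dotProduct_smul, hMz, hzx, smul_eq_mul] at this
    linarith
  have hsq : 0 ≤ (x - b • z) ⬝ᵥ (x - b • z) := by
    simpa using dotProduct_star_self_nonneg (x - b • z)
  simp only [dotProduct_sub, sub_dotProduct, dotProduct_smul, smul_dotProduct, smul_eq_mul,
    hzx] at hsq
  rw [le_div_iff₀ hb]
  nlinarith

lemma dotProduct_inv_mulVec_mem_Icc [Fintype n] [DecidableEq n] {M : Matrix n n ℝ} {b : ℝ}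
    (hb : 0 < b) (hMb : (M - b • 1).PosSemidef) {x : n → ℝ} (hx : x ⬝ᵥ x ≤ 1) :
    x ⬝ᵥ (M⁻¹ *ᵥ x) ∈ Set.Icc 0 (1 / b) :=
  ⟨dotProduct_inv_mulVec_nonneg (posSemidef_of_posSemidef_sub_smul_one hb.le hMb) x,
    (dotProduct_inv_mulVec_le_div hb hMb x).trans (div_le_div_of_nonneg_right hx hb.le)⟩

lemma posSemidef_sub_smul_one_of_recursion [Fintype n] [DecidableEq n] {T : ℕ} {b : ℝ}
    (hb : 1 < b) {x : ℕ → n → ℝ} (hx : ∀ t ∈ Icc 1 T, x t ⬝ᵥ x t ≤ 1)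
    {a : ℕ → ℝ} {A : ℕ → Matrix n n ℝ} (hA0 : A 0 = b • 1)
    (ha : ∀ t ∈ Icc 1 T, a t = 1 / (1 - x t ⬝ᵥ ((A (t - 1))⁻¹ *ᵥ x t)))
    (hArec : ∀ t ∈ Icc 1 T, A t = A (t - 1) + a t • vecMulVec (x t) (x t)) :
    ∀ t ≤ T, (A t - b • 1).PosSemidef := by
  intro t ht
  induction t with
  | zero => simpa [hA0] using PosSemidef.zero
  | succ t ih =>
    have hmem : t + 1 ∈ Icc 1 T := mem_Icc.2 ⟨by omega, ht⟩
    have hprev := ih (by omega)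
    have ha_nonneg : 0 ≤ a (t + 1) := by
      rw [ha _ hmem, Nat.add_sub_cancel]
      exact zero_le_one.trans
        (one_div_one_sub_mem_Icc hb (dotProduct_inv_mulVec_mem_Icc (by linarith) hprev
          (hx _ hmem))).1
    rw [hArec _ hmem, Nat.add_sub_cancel, add_sub_right_comm]
    exact hprev.add (posSemidef_smul_vecMulVec_self ha_nonneg _)

end LoewnerLowerBound

/-- with `‖x_t‖ ≤ 1` (i.e. `x_tᵀx_t ≤ 1`), `b > 1` and the
self-consistent weights `a_t = 1/(1 − x_tᵀA_{t−1}⁻¹x_t)`, the recursion is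
well-defined: `1 − x_tᵀA_{t−1}⁻¹x_t ≥ 1 − 1/b > 0`, and `1 ≤ a_t ≤ b/(b−1)`. -/
theorem stmt_7 {d T : ℕ} (b : ℝ) (hb : 1 < b)
    (x : ℕ → (Fin d → ℝ)) (hx : ∀ t ∈ Icc 1 T, x t ⬝ᵥ x t ≤ 1)
    (a : ℕ → ℝ) (A : ℕ → Matrix (Fin d) (Fin d) ℝ)
    (hA0 : A 0 = b • (1 : Matrix (Fin d) (Fin d) ℝ))
    (ha : ∀ t ∈ Icc 1 T, a t = 1 / (1 - x t ⬝ᵥ ((A (t - 1))⁻¹ *ᵥ x t)))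
    (hArec : ∀ t ∈ Icc 1 T, A t = A (t - 1) + a t • vecMulVec (x t) (x t)) :
    (∀ t ∈ Icc 1 T, 1 - 1 / b ≤ 1 - x t ⬝ᵥ ((A (t - 1))⁻¹ *ᵥ x t)) ∧
    (0 < 1 - 1 / b) ∧
    (∀ t ∈ Icc 1 T, 1 ≤ a t ∧ a t ≤ b / (b - 1)) := by
  have hq : ∀ t ∈ Icc 1 T, x t ⬝ᵥ ((A (t - 1))⁻¹ *ᵥ x t) ∈ Set.Icc 0 (1 / b) := fun t ht =>
    dotProduct_inv_mulVec_mem_Icc (by linarith)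
      (posSemidef_sub_smul_one_of_recursion hb hx hA0 ha hArec (t - 1)
        (by have := (mem_Icc.1 ht).2; omega)) (hx t ht)
  refine ⟨fun t ht => by linarith [(hq t ht).2], ?_,
    fun t ht => ha t ht ▸ one_div_one_sub_mem_Icc hb (hq t ht)⟩
  rw [sub_pos, div_lt_one (by linarith)]
  exact hb
end

section
/- Let ℓ_1,…,ℓ_T ≥ 0 and a_1,…,a_T ≥ 1 be real numbers, let S > 0 satisfy ℓ_t ≤ S for all t, and set T' = ⌈(Σ_{t=1}^T ℓ_t)/S⌉. Let I ⊆ {1,…,T} be a set of indices of the T' largest elements among a_1,…,a_T, i.e. |I| = T' and min_{t ∈ I} a_t ≥ a_τ for every τ ∈ {1,…,T} \ I. Then Σ_{t=1}^T ℓ_t (a_t − 1) ≤ S · Σ_{t ∈ I} (a_t − 1). -/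
/-!
Put `b t = a t - 1` and pick a threshold `m ≥ 0` separating the values of `b` on `I`
from those off `I`. On `I` we have `(ℓ t - S) b t ≤ (ℓ t - S) m`, off `I` we have
`ℓ t b t ≤ ℓ t m`, so `∑ ℓ b - S ∑_I b ≤ m (∑ ℓ - S |I|)`, which is `≤ 0` because `|I| = ⌈∑ ℓ / S⌉`.
-/

open Finset

variable {ι : Type*} [DecidableEq ι]

lemma exists_threshold_of_forall_le {s I : Finset ι} {b : ι → ℝ} (hb : ∀ t ∈ I, 0 ≤ b t)
    (hmax : ∀ t ∈ I, ∀ τ ∈ s \ I, b τ ≤ b t) :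
    ∃ m, 0 ≤ m ∧ (∀ t ∈ I, m ≤ b t) ∧ ∀ τ ∈ s \ I, b τ ≤ m := by
  rcases I.eq_empty_or_nonempty with rfl | hI
  · obtain ⟨M, hM⟩ := (s.image b).bddAbove
    refine ⟨max M 0, le_max_right _ _, by simp, fun τ hτ => ?_⟩
    exact (hM (mem_image_of_mem b (mem_sdiff.1 hτ).1)).trans (le_max_left _ _)
  · refine ⟨I.inf' hI b, (le_inf'_iff hI b).2 hb, fun t ht => inf'_le b ht,
      fun τ hτ => (le_inf'_iff hI b).2 fun t ht => hmax t ht τ hτ⟩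

lemma sum_mul_le_mul_sum_of_threshold {s I : Finset ι} (hI : I ⊆ s) {ℓ b : ι → ℝ}
    {S m : ℝ} (hm : 0 ≤ m) (hℓ0 : ∀ t ∈ s \ I, 0 ≤ ℓ t) (hℓS : ∀ t ∈ I, ℓ t ≤ S)
    (hbI : ∀ t ∈ I, m ≤ b t) (hbs : ∀ τ ∈ s \ I, b τ ≤ m)
    (hsum : ∑ t ∈ s, ℓ t ≤ S * #I) :
    ∑ t ∈ s, ℓ t * b t ≤ S * ∑ t ∈ I, b t := by
  calc ∑ t ∈ s, ℓ t * b t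
      = ∑ t ∈ I, (ℓ t - S) * b t + ∑ t ∈ s \ I, ℓ t * b t + S * ∑ t ∈ I, b t := by
        rw [← sum_sdiff hI, mul_sum]
        simp only [sub_mul, sum_sub_distrib, mul_comm S]
        ring
    _ ≤ ∑ t ∈ I, (ℓ t - S) * m + ∑ t ∈ s \ I, ℓ t * m + S * ∑ t ∈ I, b t := by
        gcongr ?_ + ?_ + _
        · exact sum_le_sum fun t ht =>
            mul_le_mul_of_nonpos_left (hbI t ht) (sub_nonpos.2 (hℓS t ht))
        · exact sum_le_sum fun t ht => mul_le_mul_of_nonneg_left (hbs t ht) (hℓ0 t ht)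
    _ = m * (∑ t ∈ s, ℓ t - S * #I) + S * ∑ t ∈ I, b t := by
        rw [← sum_mul, ← sum_mul, ← sum_sdiff hI, sum_sub_distrib, sum_const, nsmul_eq_mul]
        ring
    _ ≤ S * ∑ t ∈ I, b t :=
        add_le_of_nonpos_left (mul_nonpos_of_nonneg_of_nonpos hm (sub_nonpos.2 hsum))

/-- if `0 ≤ ℓ_t ≤ S`, `a_t ≥ 1`, `T' = ⌈(Σℓ_t)/S⌉` and `I` is a set
of indices of the `T'` largest elements among `a_1,…,a_T`, then
`Σ_{t=1}^T ℓ_t(a_t − 1) ≤ S·Σ_{t∈I}(a_t − 1)`. -/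
theorem stmt_10 (T : ℕ) (ℓ a : ℕ → ℝ) (S : ℝ) (hS : 0 < S)
    (hℓ0 : ∀ t ∈ Icc 1 T, 0 ≤ ℓ t) (hℓS : ∀ t ∈ Icc 1 T, ℓ t ≤ S)
    (ha : ∀ t ∈ Icc 1 T, 1 ≤ a t)
    (I : Finset ℕ) (hI : I ⊆ Icc 1 T)
    (hcard : I.card = ⌈(∑ t ∈ Icc 1 T, ℓ t) / S⌉₊)
    (hmax : ∀ t ∈ I, ∀ τ ∈ Icc 1 T \ I, a τ ≤ a t) :
    ∑ t ∈ Icc 1 T, ℓ t * (a t - 1) ≤ S * ∑ t ∈ I, (a t - 1) := by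
  have hsum : ∑ t ∈ Icc 1 T, ℓ t ≤ S * #I := by
    rw [hcard, mul_comm, ← div_le_iff₀ hS]
    exact Nat.le_ceil _
  obtain ⟨m, hm, hmI, hmout⟩ := exists_threshold_of_forall_le (b := fun t => a t - 1)
    (fun t ht => sub_nonneg.2 (ha t (hI ht)))
    fun t ht τ hτ => sub_le_sub_right (hmax t ht τ hτ) 1
  exact sum_mul_le_mul_sum_of_threshold hI hm (fun t ht => hℓ0 t (mem_sdiff.1 ht).1)
    (fun t ht => hℓS t (hI ht)) hmI hmout hsum
end

section
/- Fix b > 0, c > 0, positive weights ã_1,…,ã_T > 0, inputs x_1,…,x_T ∈ ℝ^d, labels y_1,…,y_T ∈ ℝ, and a reference vector ū ∈ ℝ^d. Then the function J(u_1,…,u_T) = b‖ū‖² + c·Σ_{t=1}^T ‖u_t − ū‖² + Σ_{t=1}^T ã_t (y_t − u_tᵀx_t)² is minimized over (u_1,…,u_T) ∈ (ℝ^d)^T at u_t = ū + (c^{−1}/(ã_t^{−1} + c^{−1}‖x_t‖²)) · (y_t − ūᵀx_t) · x_t for t = 1,…,T, and its minimal value equals J_min = b‖ū‖² + Σ_{t=1}^T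 (1/(ã_t^{−1} + c^{−1}‖x_t‖²)) · (y_t − ūᵀx_t)². -/
/-!
Writing `u_t = ū + v_t`, the objective splits into `b‖ū‖²` plus independent terms
`c‖v‖² + ã (r - v·x)²` with `r = y - ū·x`. Completing the square with the multiplier
`τ = r / (ã⁻¹ + c⁻¹‖x‖²)` gives `c‖v‖² ≥ 2τ (v·x) - τ² c⁻¹‖x‖²` and `ã e² ≥ 2τ e - τ² ã⁻¹`;
adding them for `e = r - v·x` bounds each term below by `2τr - τ²(ã⁻¹ + c⁻¹‖x‖²) = r² / (ã⁻¹ + c⁻¹‖x‖²)`,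
with equality exactly when `c v = τ x` and `ã e = τ`, i.e. at the stated `u_t`.
-/

open Matrix Finset

section
variable {ι : Type*} [Fintype ι]

def ridgeCost (c a : ℝ) (x : ι → ℝ) (r : ℝ) (v : ι → ℝ) : ℝ :=
  c * (v ⬝ᵥ v) + a * (r - v ⬝ᵥ x) ^ 2

lemma two_mul_mul_le_mul_sq_add (a t e : ℝ) (ha : 0 < a) :
    2 * t * e ≤ a * e ^ 2 + t ^ 2 * a⁻¹ := by
  have key : a * e ^ 2 + t ^ 2 * a⁻¹ - 2 * t * e = a⁻¹ * (a * e - t) ^ 2 := by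
    field_simp; ring
  nlinarith [mul_nonneg (inv_nonneg.2 ha.le) (sq_nonneg (a * e - t))]

lemma two_mul_mul_dotProduct_le (c t : ℝ) (hc : 0 < c) (v x : ι → ℝ) :
    2 * t * (v ⬝ᵥ x) ≤ c * (v ⬝ᵥ v) + t ^ 2 * (c⁻¹ * (x ⬝ᵥ x)) := by
  have key : c * (v ⬝ᵥ v) + t ^ 2 * (c⁻¹ * (x ⬝ᵥ x)) - 2 * t * (v ⬝ᵥ x)
      = c⁻¹ * ((c • v - t • x) ⬝ᵥ (c • v - t • x)) := by
    simp only [sub_dotProduct, dotProduct_sub, smul_dotProduct, dotProduct_smul, smul_eq_mul,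
      dotProduct_comm x v]
    field_simp; ring
  have hsq : 0 ≤ (c • v - t • x) ⬝ᵥ (c • v - t • x) := dotProduct_self_star_nonneg _
  nlinarith [mul_nonneg (inv_nonneg.2 hc.le) hsq]

lemma one_div_mul_sq_le_ridgeCost {c a : ℝ} (hc : 0 < c) (ha : 0 < a) (x : ι → ℝ) (r : ℝ)
    (v : ι → ℝ) :
    1 / (a⁻¹ + c⁻¹ * (x ⬝ᵥ x)) * r ^ 2 ≤ ridgeCost c a x r v := by
  set D := a⁻¹ + c⁻¹ * (x ⬝ᵥ x)
  have hD : 0 < D := by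
    have : 0 ≤ x ⬝ᵥ x := dotProduct_self_star_nonneg x
    positivity
  set τ := r / D
  have hv := two_mul_mul_dotProduct_le c τ hc v x
  have he := two_mul_mul_le_mul_sq_add a τ (r - v ⬝ᵥ x) ha
  have hval : 1 / D * r ^ 2 = 2 * τ * r - τ ^ 2 * D := by
    simp only [τ]; field_simp; ring
  unfold ridgeCost
  nlinarith

lemma ridgeCost_smul_self {c a : ℝ} (hc : 0 < c) (ha : 0 < a) (x : ι → ℝ) (r : ℝ) :
    ridgeCost c a x r ((c⁻¹ / (a⁻¹ + c⁻¹ * (x ⬝ᵥ x)) * r) • x)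
      = 1 / (a⁻¹ + c⁻¹ * (x ⬝ᵥ x)) * r ^ 2 := by
  simp only [ridgeCost, smul_dotProduct, dotProduct_smul, smul_eq_mul]
  have hq : 0 ≤ x ⬝ᵥ x := dotProduct_self_star_nonneg x
  generalize x ⬝ᵥ x = q at *
  have hD : a⁻¹ + c⁻¹ * q ≠ 0 := by positivity
  field_simp
  ring

end

theorem stmt_14_general {d T : ℕ} (b c : ℝ) (hc : 0 < c)
    (atil : ℕ → ℝ) (hatil : ∀ t ∈ Icc 1 T, 0 < atil t)
    (x : ℕ → (Fin d → ℝ)) (y : ℕ → ℝ) (ubar : Fin d → ℝ)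
    (J : (ℕ → Fin d → ℝ) → ℝ)
    (hJ : ∀ u, J u = b * (ubar ⬝ᵥ ubar)
        + c * ∑ t ∈ Icc 1 T, ((u t - ubar) ⬝ᵥ (u t - ubar))
        + ∑ t ∈ Icc 1 T, atil t * (y t - u t ⬝ᵥ x t) ^ 2)
    (uopt : ℕ → Fin d → ℝ)
    (huopt : ∀ t ∈ Icc 1 T, uopt t = ubar
        + (c⁻¹ / ((atil t)⁻¹ + c⁻¹ * (x t ⬝ᵥ x t)) * (y t - ubar ⬝ᵥ x t)) • x t) :
    (∀ u : ℕ → Fin d → ℝ, J uopt ≤ J u) ∧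
    J uopt = b * (ubar ⬝ᵥ ubar)
        + ∑ t ∈ Icc 1 T,
            (1 / ((atil t)⁻¹ + c⁻¹ * (x t ⬝ᵥ x t))) * (y t - ubar ⬝ᵥ x t) ^ 2 := by
  have hJ_sum : ∀ u, J u = b * (ubar ⬝ᵥ ubar) + ∑ t ∈ Icc 1 T,
      ridgeCost c (atil t) (x t) (y t - ubar ⬝ᵥ x t) (u t - ubar) := fun u => by
    rw [hJ, mul_sum, add_assoc, ← sum_add_distrib]
    congr 1
    refine sum_congr rfl fun t _ => ?_
    rw [ridgeCost, sub_dotProduct (u t) ubar (x t), sub_sub_sub_cancel_right]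
  have hJ_uopt : ∀ t ∈ Icc 1 T,
      ridgeCost c (atil t) (x t) (y t - ubar ⬝ᵥ x t) (uopt t - ubar)
        = 1 / ((atil t)⁻¹ + c⁻¹ * (x t ⬝ᵥ x t)) * (y t - ubar ⬝ᵥ x t) ^ 2 := fun t ht => by
    rw [huopt t ht, add_sub_cancel_left]
    exact ridgeCost_smul_self hc (hatil t ht) _ _
  refine ⟨fun u => ?_, ?_⟩
  · rw [hJ_sum, hJ_sum]
    gcongr with t ht
    rw [hJ_uopt t ht]
    exact one_div_mul_sq_le_ridgeCost hc (hatil t ht) _ _ _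
  · rw [hJ_sum, sum_congr rfl hJ_uopt]

/-- `J(u_1,…,u_T) = b‖ū‖² + c·Σ‖u_t − ū‖² + Σ ã_t (y_t − u_tᵀx_t)²`
is minimized at `u_t = ū + (c⁻¹/(ã_t⁻¹ + c⁻¹‖x_t‖²))(y_t − ūᵀx_t)x_t` and its
minimal value is `b‖ū‖² + Σ (1/(ã_t⁻¹ + c⁻¹‖x_t‖²))(y_t − ūᵀx_t)²`. -/
theorem stmt_14 {d T : ℕ} (b c : ℝ) (hb : 0 < b) (hc : 0 < c)
    (atil : ℕ → ℝ) (hatil : ∀ t ∈ Icc 1 T, 0 < atil t)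
    (x : ℕ → (Fin d → ℝ)) (y : ℕ → ℝ) (ubar : Fin d → ℝ)
    (J : (ℕ → Fin d → ℝ) → ℝ)
    (hJ : ∀ u, J u = b * (ubar ⬝ᵥ ubar)
        + c * ∑ t ∈ Icc 1 T, ((u t - ubar) ⬝ᵥ (u t - ubar))
        + ∑ t ∈ Icc 1 T, atil t * (y t - u t ⬝ᵥ x t) ^ 2)
    (uopt : ℕ → Fin d → ℝ)
    (huopt : ∀ t ∈ Icc 1 T, uopt t = ubar
        + (c⁻¹ / ((atil t)⁻¹ + c⁻¹ * (x t ⬝ᵥ x t)) * (y t - ubar ⬝ᵥ x t)) • x t) :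
    (∀ u : ℕ → Fin d → ℝ, J uopt ≤ J u) ∧
    J uopt = b * (ubar ⬝ᵥ ubar)
        + ∑ t ∈ Icc 1 T,
            (1 / ((atil t)⁻¹ + c⁻¹ * (x t ⬝ᵥ x t))) * (y t - ubar ⬝ᵥ x t) ^ 2 :=
  stmt_14_general b c hc atil hatil x y ubar J hJ uopt huopt
end

section
/- Assume ‖x_t‖ ≤ 1 for all t = 1,…,T, b > 1, c > 0 with 1/b + 1/c < 1. Let a_t = 1/(1 − x_tᵀ A_{t−1}^{−1} x_t) and ã_t = 1/(1 − x_tᵀ A_{t−1}^{−1} x_t − c^{−1}‖x_t‖²), which are well-defined and positive. Then the cumulative loss of WEMM satisfies L_T(WEMM) ≤ inf over all (u_1,…,u_T, ū) ∈ (ℝ^d)^{T+1} of ( b‖ū‖² + c·Σ_{t=1}^T ‖u_t − ū‖² + Σ_{t=1}^T ã_t (y_t − u_tᵀx_t)² ). -/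
/-!
On round `t` the quantity `Pₜ = ∑ₛ aₛ yₛ² - Bₜ ⬝ A⁻¹ₜ Bₜ` grows by exactly `(yₜ - ŷₜ)²`: this is a
rank-one (Sherman–Morrison) computation, which is where the weight `aₜ = 1 / (1 - xₜ ⬝ A⁻¹ₜ₋₁ xₜ)`
comes from. Since `Pₜ` is the minimum over `ū` of the weighted ridge loss
`b ‖ū‖² + ∑ₛ aₛ (yₛ - ū ⬝ xₛ)²`, the loss of WEMM is bounded by that ridge loss for every `ū`.
Finally `1 / aₜ = 1 / ãₜ + ‖xₜ‖² / c`, so a weighted Cauchy–Schwarz inequality gives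
`aₜ (yₜ - ū ⬝ xₜ)² ≤ c ‖uₜ - ū‖² + ãₜ (yₜ - uₜ ⬝ xₜ)²`. All denominators are positive because
`Aₜ ≥ b I` forces `xₜ ⬝ A⁻¹ₜ₋₁ xₜ ≤ ‖xₜ‖² / b`, and `1 / b + 1 / c < 1`.
-/

open Matrix Finset

section

variable {n : Type*} [Fintype n]

lemma dotProduct_self_nonneg (v : n → ℝ) : 0 ≤ v ⬝ᵥ v :=
  Finset.sum_nonneg fun i _ => mul_self_nonneg (v i)

lemma sq_dotProduct_le (v w : n → ℝ) : (v ⬝ᵥ w) ^ 2 ≤ (v ⬝ᵥ v) * (w ⬝ᵥ w) := by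
  simpa [dotProduct, sq] using Finset.sum_mul_sq_le_sq_mul_sq univ v w

lemma dotProduct_add_smul_vecMulVec_mulVec (M : Matrix n n ℝ) (α : ℝ) (x z : n → ℝ) :
    z ⬝ᵥ ((M + α • vecMulVec x x) *ᵥ z) = z ⬝ᵥ (M *ᵥ z) + α * (x ⬝ᵥ z) ^ 2 := by
  rw [add_mulVec, smul_mulVec, vecMulVec_mulVec, op_smul_eq_smul, dotProduct_add,
    dotProduct_smul, dotProduct_smul, dotProduct_comm z x, smul_eq_mul, smul_eq_mul]
  ring

variable [DecidableEq n] {M : Matrix n n ℝ} {b : ℝ}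

lemma isUnit_det_of_le_dotProduct_mulVec (hb : 0 < b)
    (hM : ∀ z, b * (z ⬝ᵥ z) ≤ z ⬝ᵥ (M *ᵥ z)) : IsUnit M.det := by
  rw [isUnit_iff_ne_zero, Ne, ← exists_mulVec_eq_zero_iff]
  rintro ⟨v, hv, hMv⟩
  have hvv : b * (v ⬝ᵥ v) ≤ 0 := by simpa [hMv] using hM v
  have : v ⬝ᵥ v = 0 :=
    le_antisymm (nonpos_of_mul_nonpos_right hvv hb) (dotProduct_self_nonneg v)
  exact hv (dotProduct_self_eq_zero.mp this)

lemma mul_dotProduct_inv_mulVec_le (hb : 0 < b) (hM : ∀ z, b * (z ⬝ᵥ z) ≤ z ⬝ᵥ (M *ᵥ z))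
    (x : n → ℝ) : b * (x ⬝ᵥ (M⁻¹ *ᵥ x)) ≤ x ⬝ᵥ x := by
  set w := M⁻¹ *ᵥ x
  have hxw : b * (w ⬝ᵥ w) ≤ x ⬝ᵥ w := by
    have hx : M *ᵥ w = x := by
      rw [mulVec_mulVec, mul_nonsing_inv _ (isUnit_det_of_le_dotProduct_mulVec hb hM),
        one_mulVec]
    simpa [← hx, dotProduct_comm (M *ᵥ w)] using hM w
  rcases le_or_gt (x ⬝ᵥ w) 0 with hneg | hpos
  · nlinarith [dotProduct_self_nonneg x]
  · -- Cauchy–Schwarz: `b (x ⬝ᵥ w)² ≤ b (x ⬝ᵥ x)(w ⬝ᵥ w) ≤ (x ⬝ᵥ x)(x ⬝ᵥ w)`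
    refine le_of_mul_le_mul_right ?_ hpos
    nlinarith [mul_le_mul_of_nonneg_left (sq_dotProduct_le x w) hb.le,
      mul_le_mul_of_nonneg_left hxw (dotProduct_self_nonneg x)]

lemma two_mul_dotProduct_sub_le_dotProduct_inv_mulVec (hsymm : M.IsSymm) (hdet : IsUnit M.det)
    (hM : ∀ z, 0 ≤ z ⬝ᵥ (M *ᵥ z)) (B u : n → ℝ) :
    2 * (u ⬝ᵥ B) - u ⬝ᵥ (M *ᵥ u) ≤ B ⬝ᵥ (M⁻¹ *ᵥ B) := by
  set w := M⁻¹ *ᵥ B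
  have hw : M *ᵥ w = B := by rw [mulVec_mulVec, mul_nonsing_inv _ hdet, one_mulVec]
  have hcross : w ⬝ᵥ (M *ᵥ u) = u ⬝ᵥ B := by
    rw [← hw, ← dotProduct_transpose_mulVec, hsymm.eq]
  have := hM (u - w)
  rw [mulVec_sub, hw, dotProduct_sub, sub_dotProduct, sub_dotProduct, hcross,
    dotProduct_comm w B] at this
  linarith

lemma dotProduct_inv_mulVec_add_smul_vecMulVec (hsymm : M.IsSymm) (hdet : IsUnit M.det)
    {α : ℝ} {x : n → ℝ} (hα : α * (1 - x ⬝ᵥ (M⁻¹ *ᵥ x)) = 1)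
    (hdet' : IsUnit (M + α • vecMulVec x x).det) (B : n → ℝ) (y : ℝ) :
    (B + (α * y) • x) ⬝ᵥ ((M + α • vecMulVec x x)⁻¹ *ᵥ (B + (α * y) • x))
      = B ⬝ᵥ (M⁻¹ *ᵥ B) + α * y ^ 2 - (y - B ⬝ᵥ (M⁻¹ *ᵥ x)) ^ 2 := by
  set M' := M + α • vecMulVec x x
  set B' := B + (α * y) • x
  set W := M⁻¹ *ᵥ B
  set W' := M'⁻¹ *ᵥ B'
  set v := M⁻¹ *ᵥ x
  set yhat := B ⬝ᵥ v
  set e := y - x ⬝ᵥ W'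
  have hW : M *ᵥ W = B := by rw [mulVec_mulVec, mul_nonsing_inv _ hdet, one_mulVec]
  have hW' : M' *ᵥ W' = B' := by rw [mulVec_mulVec, mul_nonsing_inv _ hdet', one_mulVec]
  have hyhat : yhat = x ⬝ᵥ W := by
    rw [← dotProduct_transpose_mulVec, hsymm.inv.eq]
  have hstep : W' = W + (α * e) • v := by
    have hM : M *ᵥ (W' - W) = (α * e) • x := by
      rw [add_mulVec, smul_mulVec, vecMulVec_mulVec, op_smul_eq_smul] at hW'
      rw [mulVec_sub, hW, eq_sub_of_add_eq hW']
      ext i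
      simp only [B', e, Pi.add_apply, Pi.sub_apply, Pi.smul_apply, smul_eq_mul]
      ring
    rw [← sub_eq_iff_eq_add']
    simpa [mulVec_mulVec, nonsing_inv_mul _ hdet, mulVec_smul] using congrArg (M⁻¹ *ᵥ ·) hM
  have hxW' : x ⬝ᵥ W' = yhat + α * e * (x ⬝ᵥ v) := by
    rw [hstep, dotProduct_add, dotProduct_smul, smul_eq_mul, hyhat]
  -- `e (1 + α (x ⬝ᵥ v)) = y - yhat`, and `1 + α (x ⬝ᵥ v) = α` by the choice of `α`
  have he : α * e = y - yhat := by
    have he_def : e = y - x ⬝ᵥ W' := rfl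
    linear_combination he_def - hxW' + e * hα
  have hBW' : B' ⬝ᵥ W' = B ⬝ᵥ W + α * e * yhat + α * y * (x ⬝ᵥ W') := by
    rw [add_dotProduct, smul_dotProduct, smul_eq_mul, hstep, dotProduct_add, dotProduct_smul,
      smul_eq_mul]
  rw [hBW', show x ⬝ᵥ W' = y - e by ring]
  linear_combination (yhat - y) * he

lemma dotProduct_inv_mulVec_lt_one (hb : 1 < b) (hM : ∀ z, b * (z ⬝ᵥ z) ≤ z ⬝ᵥ (M *ᵥ z))
    {x : n → ℝ} (hx : x ⬝ᵥ x ≤ 1) : x ⬝ᵥ (M⁻¹ *ᵥ x) < 1 := by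
  nlinarith [mul_dotProduct_inv_mulVec_le (one_pos.trans hb) hM x]

lemma one_sub_dotProduct_inv_mulVec_sub_pos {c : ℝ} (hb : 0 < b) (hc : 0 < c)
    (hbc : 1 / b + 1 / c < 1) (hM : ∀ z, b * (z ⬝ᵥ z) ≤ z ⬝ᵥ (M *ᵥ z)) {x : n → ℝ}
    (hx : x ⬝ᵥ x ≤ 1) : 0 < 1 - x ⬝ᵥ (M⁻¹ *ᵥ x) - c⁻¹ * (x ⬝ᵥ x) := by
  have hr : x ⬝ᵥ (M⁻¹ *ᵥ x) ≤ (x ⬝ᵥ x) * (1 / b) := by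
    rw [mul_one_div, le_div_iff₀ hb, mul_comm]
    exact mul_dotProduct_inv_mulVec_le hb hM x
  have hsum : (x ⬝ᵥ x) * (1 / b + 1 / c) ≤ 1 / b + 1 / c :=
    mul_le_of_le_one_left (by positivity) hx
  rw [inv_eq_one_div c]
  nlinarith

end

lemma one_div_mul_add_sq_le {D c N m p q : ℝ} (hD : 0 < D) (hc : 0 < c) (hN : 0 ≤ N) (hm : 0 ≤ m)
    (hq : q ^ 2 ≤ N * m) : 1 / (D + c⁻¹ * N) * (p + q) ^ 2 ≤ c * m + 1 / D * p ^ 2 := by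
  have hcD : 0 < c * D := mul_pos hc hD
  -- AM–GM, after `q² ≤ N m`
  have hcross : 2 * p * q * (c * D) ≤ (c * D) ^ 2 * m + N * p ^ 2 := by
    rcases hN.eq_or_lt with rfl | hNpos
    · obtain rfl : q = 0 := by simpa using hq
      nlinarith
    · refine le_of_mul_le_mul_left ?_ hNpos
      nlinarith [sq_nonneg (c * D * q - N * p), mul_le_mul_of_nonneg_left hq (sq_nonneg (c * D))]
  rw [div_mul_eq_mul_div, one_mul, div_le_iff₀ (by positivity)]
  field_simp
  nlinarith

section

variable {n : Type*} [DecidableEq n] {b : ℝ} {T : ℕ} {x : ℕ → n → ℝ} {a : ℕ → ℝ}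
  {A : ℕ → Matrix n n ℝ}

lemma wemm_isSymm (hA0 : A 0 = b • (1 : Matrix n n ℝ))
    (hArec : ∀ t ∈ Icc 1 T, A t = A (t - 1) + a t • vecMulVec (x t) (x t)) :
    ∀ t ≤ T, (A t).IsSymm := by
  intro t
  induction t with
  | zero => intro _; rw [hA0]; exact isSymm_one.smul b
  | succ t ih =>
    intro ht
    rw [hArec (t + 1) (by simp; omega), Nat.add_sub_cancel]
    exact (ih (by omega)).add (IsSymm.smul (transpose_vecMulVec _ _) _)

variable [Fintype n] {y : ℕ → ℝ} {Bv : ℕ → n → ℝ}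

lemma wemm_le_dotProduct_mulVec (hb : 1 < b) (hx : ∀ t ∈ Icc 1 T, x t ⬝ᵥ x t ≤ 1)
    (hA0 : A 0 = b • (1 : Matrix n n ℝ))
    (ha : ∀ t ∈ Icc 1 T, a t = 1 / (1 - x t ⬝ᵥ ((A (t - 1))⁻¹ *ᵥ x t)))
    (hArec : ∀ t ∈ Icc 1 T, A t = A (t - 1) + a t • vecMulVec (x t) (x t)) :
    ∀ t ≤ T, ∀ z, b * (z ⬝ᵥ z) ≤ z ⬝ᵥ (A t *ᵥ z) := by
  intro t
  induction t with
  | zero => intro _ z; simp [hA0, smul_mulVec]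
  | succ t ih =>
    intro ht z
    have hmem : t + 1 ∈ Icc 1 T := by simp; omega
    have hA := ih (by omega)
    have hapos : 0 < a (t + 1) := by
      rw [ha (t + 1) hmem, Nat.add_sub_cancel, one_div_pos, sub_pos]
      exact dotProduct_inv_mulVec_lt_one hb hA (hx (t + 1) hmem)
    rw [hArec (t + 1) hmem, Nat.add_sub_cancel, dotProduct_add_smul_vecMulVec_mulVec]
    nlinarith [hA z, sq_nonneg (x (t + 1) ⬝ᵥ z)]

lemma wemm_regularized_loss_eq (hA0 : A 0 = b • (1 : Matrix n n ℝ))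
    (hArec : ∀ t ∈ Icc 1 T, A t = A (t - 1) + a t • vecMulVec (x t) (x t))
    (hBv : ∀ t, Bv t = ∑ s ∈ Icc 1 t, (a s * y s) • x s) (u : n → ℝ) :
    ∀ t ≤ T, b * (u ⬝ᵥ u) + ∑ s ∈ Icc 1 t, a s * (y s - u ⬝ᵥ x s) ^ 2
      = u ⬝ᵥ (A t *ᵥ u) - 2 * (u ⬝ᵥ Bv t) + ∑ s ∈ Icc 1 t, a s * y s ^ 2 := by
  intro t
  induction t with
  | zero => intro _; simp [hA0, hBv, smul_mulVec]
  | succ t ih =>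
    intro ht
    have hBsucc : Bv (t + 1) = Bv t + (a (t + 1) * y (t + 1)) • x (t + 1) := by
      rw [hBv, hBv, sum_Icc_succ_top (by omega)]
    rw [sum_Icc_succ_top (by omega), sum_Icc_succ_top (by omega), ← add_assoc, ih (by omega),
      hArec (t + 1) (by simp; omega), Nat.add_sub_cancel, dotProduct_add_smul_vecMulVec_mulVec,
      hBsucc, dotProduct_add, dotProduct_smul, smul_eq_mul, dotProduct_comm u (x (t + 1))]
    ring

lemma wemm_loss_eq (hb : 1 < b) (hx : ∀ t ∈ Icc 1 T, x t ⬝ᵥ x t ≤ 1)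
    (hA0 : A 0 = b • (1 : Matrix n n ℝ))
    (ha : ∀ t ∈ Icc 1 T, a t = 1 / (1 - x t ⬝ᵥ ((A (t - 1))⁻¹ *ᵥ x t)))
    (hArec : ∀ t ∈ Icc 1 T, A t = A (t - 1) + a t • vecMulVec (x t) (x t))
    (hBv : ∀ t, Bv t = ∑ s ∈ Icc 1 t, (a s * y s) • x s) :
    ∀ t ≤ T, ∑ s ∈ Icc 1 t, (y s - Bv (s - 1) ⬝ᵥ ((A (s - 1))⁻¹ *ᵥ x s)) ^ 2
      = ∑ s ∈ Icc 1 t, a s * y s ^ 2 - Bv t ⬝ᵥ ((A t)⁻¹ *ᵥ Bv t) := by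
  have hA := wemm_le_dotProduct_mulVec hb hx hA0 ha hArec
  have hb0 : 0 < b := one_pos.trans hb
  intro t
  induction t with
  | zero => intro _; simp [hBv]
  | succ t ih =>
    intro ht
    have hmem : t + 1 ∈ Icc 1 T := by simp; omega
    have hweight : a (t + 1) * (1 - x (t + 1) ⬝ᵥ ((A t)⁻¹ *ᵥ x (t + 1))) = 1 := by
      rw [ha (t + 1) hmem, Nat.add_sub_cancel]
      exact one_div_mul_cancel <| sub_ne_zero.mpr
        (dotProduct_inv_mulVec_lt_one hb (hA t (by omega)) (hx (t + 1) hmem)).ne'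
    have hrec : A (t + 1) = A t + a (t + 1) • vecMulVec (x (t + 1)) (x (t + 1)) := by
      simpa using hArec (t + 1) hmem
    have hupdate := dotProduct_inv_mulVec_add_smul_vecMulVec (wemm_isSymm hA0 hArec t (by omega))
      (isUnit_det_of_le_dotProduct_mulVec hb0 (hA t (by omega))) hweight
      (hrec ▸ isUnit_det_of_le_dotProduct_mulVec hb0 (hA (t + 1) ht)) (Bv t) (y (t + 1))
    have hBsucc : Bv (t + 1) = Bv t + (a (t + 1) * y (t + 1)) • x (t + 1) := by
      rw [hBv, hBv, sum_Icc_succ_top (by omega)]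
    rw [sum_Icc_succ_top (by omega), sum_Icc_succ_top (by omega), ih (by omega),
      Nat.add_sub_cancel, hrec, hBsucc, hupdate]
    ring

lemma wemm_weight_mul_sq_le {c : ℝ} (hb : 1 < b) (hc : 0 < c) (hbc : 1 / b + 1 / c < 1)
    (hx : ∀ t ∈ Icc 1 T, x t ⬝ᵥ x t ≤ 1) (hA0 : A 0 = b • (1 : Matrix n n ℝ))
    (ha : ∀ t ∈ Icc 1 T, a t = 1 / (1 - x t ⬝ᵥ ((A (t - 1))⁻¹ *ᵥ x t)))
    (hArec : ∀ t ∈ Icc 1 T, A t = A (t - 1) + a t • vecMulVec (x t) (x t)) {atil : ℕ → ℝ}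
    (hatil : ∀ t ∈ Icc 1 T,
      atil t = 1 / (1 - x t ⬝ᵥ ((A (t - 1))⁻¹ *ᵥ x t) - c⁻¹ * (x t ⬝ᵥ x t)))
    {t : ℕ} (ht : t ∈ Icc 1 T) (u ubar : n → ℝ) :
    a t * (y t - ubar ⬝ᵥ x t) ^ 2
      ≤ c * ((u - ubar) ⬝ᵥ (u - ubar)) + atil t * (y t - u ⬝ᵥ x t) ^ 2 := by
  have hA := wemm_le_dotProduct_mulVec hb hx hA0 ha hArec (t - 1) (by simp at ht; omega)
  have hden := one_sub_dotProduct_inv_mulVec_sub_pos (one_pos.trans hb) hc hbc hA (hx t ht)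
  have hsplit : y t - ubar ⬝ᵥ x t = (y t - u ⬝ᵥ x t) + (u - ubar) ⬝ᵥ x t := by
    rw [sub_dotProduct]; ring
  have hcs : ((u - ubar) ⬝ᵥ x t) ^ 2 ≤ (x t ⬝ᵥ x t) * ((u - ubar) ⬝ᵥ (u - ubar)) := by
    rw [dotProduct_comm]; exact sq_dotProduct_le _ _
  rw [ha t ht, hatil t ht, hsplit]
  convert one_div_mul_add_sq_le hden hc (dotProduct_self_nonneg _) (dotProduct_self_nonneg _) hcs
    using 3
  ring

end

/-- the cumulative loss of WEMM is at most the infimum over all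
tuples `(u_1,…,u_T, ū)` of `b‖ū‖² + c·Σ‖u_t − ū‖² + Σ ã_t (y_t − u_tᵀx_t)²`. -/
theorem stmt_15 {d T : ℕ} (b c : ℝ) (hb : 1 < b) (hc : 0 < c)
    (hbc : 1 / b + 1 / c < 1)
    (x : ℕ → (Fin d → ℝ)) (hx : ∀ t ∈ Icc 1 T, x t ⬝ᵥ x t ≤ 1)
    (y : ℕ → ℝ)
    (a atil : ℕ → ℝ) (A : ℕ → Matrix (Fin d) (Fin d) ℝ)
    (hA0 : A 0 = b • (1 : Matrix (Fin d) (Fin d) ℝ))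
    (ha : ∀ t ∈ Icc 1 T, a t = 1 / (1 - x t ⬝ᵥ ((A (t - 1))⁻¹ *ᵥ x t)))
    (hArec : ∀ t ∈ Icc 1 T, A t = A (t - 1) + a t • vecMulVec (x t) (x t))
    (hatil : ∀ t ∈ Icc 1 T,
      atil t = 1 / (1 - x t ⬝ᵥ ((A (t - 1))⁻¹ *ᵥ x t) - c⁻¹ * (x t ⬝ᵥ x t)))
    (Bv : ℕ → (Fin d → ℝ))
    (hBv : ∀ t, Bv t = ∑ s ∈ Icc 1 t, (a s * y s) • x s) :
    ∑ t ∈ Icc 1 T, (y t - Bv (t - 1) ⬝ᵥ ((A (t - 1))⁻¹ *ᵥ x t)) ^ 2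
      ≤ ⨅ p : (ℕ → Fin d → ℝ) × (Fin d → ℝ),
          (b * (p.2 ⬝ᵥ p.2)
            + c * ∑ t ∈ Icc 1 T, ((p.1 t - p.2) ⬝ᵥ (p.1 t - p.2))
            + ∑ t ∈ Icc 1 T, atil t * (y t - p.1 t ⬝ᵥ x t) ^ 2) := by
  have hb0 : 0 < b := one_pos.trans hb
  have hAT := wemm_le_dotProduct_mulVec hb hx hA0 ha hArec T le_rfl
  refine le_ciInf fun ⟨u, ubar⟩ => ?_
  calc ∑ t ∈ Icc 1 T, (y t - Bv (t - 1) ⬝ᵥ ((A (t - 1))⁻¹ *ᵥ x t)) ^ 2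
      = ∑ t ∈ Icc 1 T, a t * y t ^ 2 - Bv T ⬝ᵥ ((A T)⁻¹ *ᵥ Bv T) :=
        wemm_loss_eq hb hx hA0 ha hArec hBv T le_rfl
    _ ≤ b * (ubar ⬝ᵥ ubar) + ∑ t ∈ Icc 1 T, a t * (y t - ubar ⬝ᵥ x t) ^ 2 := by
        rw [wemm_regularized_loss_eq hA0 hArec hBv ubar T le_rfl]
        linarith [two_mul_dotProduct_sub_le_dotProduct_inv_mulVec
          (wemm_isSymm hA0 hArec T le_rfl) (isUnit_det_of_le_dotProduct_mulVec hb0 hAT)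
          (fun z => (mul_nonneg hb0.le (dotProduct_self_nonneg z)).trans (hAT z)) (Bv T) ubar]
    _ ≤ b * (ubar ⬝ᵥ ubar) + ∑ t ∈ Icc 1 T,
          (c * ((u t - ubar) ⬝ᵥ (u t - ubar)) + atil t * (y t - u t ⬝ᵥ x t) ^ 2) := by
        gcongr with t ht
        exact wemm_weight_mul_sq_le hb hc hbc hx hA0 ha hArec hatil ht (u t) ubar
    _ = _ := by rw [sum_add_distrib, mul_sum, add_assoc]
end
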